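/- arXiv:2511.18021 — 4 statements merged into one kernel-verified Lean document; each statement's English description precedes it below -/
import Mathlib

section
/- Every eigenvalue of a unital positive linear map on the space of operators on a finite-dimensional complex Hilbert space has modulus at most 1. -/
open Matrix
open scoped ComplexOrder

abbrev MatC (n : ℕ) := Matrix (Fin n) (Fin n) ℂ

/-- Complete positivity of a linear map on matrices: every matrix amplification
preserves positive semidefiniteness. -/
def IsCompletelyPositive {n : ℕ} (Φ : Module.End ℂ (MatC n)) : Prop :=
  ∀ (k : ℕ) (M : Matrix (Fin n × Fin k) (Fin n × Fin k) ℂ), M.PosSemidef →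
    (Matrix.of fun p q : Fin n × Fin k =>
      Φ (Matrix.of fun i j => M (i, p.2) (j, q.2)) p.1 q.1).PosSemidef

/-!
With the operator norm the matrix algebra is a C⋆-algebra. There every element is a combination
`∑ Iᵏ • yₖ` of four positive elements of no larger norm, and a positive map `f` satisfies
`‖f y‖ ≤ ‖f 1‖ ‖y‖` for positive `y`, so a positive unital map has norm at most `4`. Powers of a
positive unital map are again positive and unital, hence the orbit `Φᵏ X = cᵏ • X` of an
eigenvector is bounded, which forces `‖c‖ ≤ 1`.
-/

theorem Module.End.HasEigenvector.norm_le_one_of_bounded_orbit {𝕜 E : Type*}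
    [NormedField 𝕜] [NormedAddCommGroup E] [NormedSpace 𝕜 E] {f : Module.End 𝕜 E} {μ : 𝕜}
    {v : E} (hv : f.HasEigenvector μ v) {C : ℝ} (hC : ∀ k : ℕ, ‖(f ^ k) v‖ ≤ C) : ‖μ‖ ≤ 1 := by
  have hv_pos : 0 < ‖v‖ := norm_pos_iff.mpr hv.2
  by_contra! hμ
  obtain ⟨k, hk⟩ := pow_unbounded_of_one_lt (C / ‖v‖) hμ
  have := hC k
  rw [hv.pow_apply, norm_smul, norm_pow] at this
  rw [div_lt_iff₀ hv_pos] at hk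
  linarith

section CStarAlgebra

variable {A B : Type*} [CStarAlgebra A] [PartialOrder A] [StarOrderedRing A]
  [CStarAlgebra B] [PartialOrder B] [StarOrderedRing B]

theorem PositiveLinearMap.norm_apply_le_four_mul (f : A →ₚ[ℂ] B) (a : A) :
    ‖f a‖ ≤ 4 * ‖f 1‖ * ‖a‖ := by
  obtain ⟨y, hy_nonneg, hy_norm, rfl⟩ := CStarAlgebra.exists_sum_four_nonneg a
  calc ‖f (∑ i : Fin 4, Complex.I ^ (i : ℕ) • y i)‖
      ≤ ∑ i : Fin 4, ‖f (y i)‖ := by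
        rw [map_sum]
        refine (norm_sum_le _ _).trans_eq ?_
        simp only [map_smul, norm_smul, norm_pow, Complex.norm_I, one_pow, one_mul]
    _ ≤ ∑ _i : Fin 4, ‖f 1‖ * ‖∑ i : Fin 4, Complex.I ^ (i : ℕ) • y i‖ :=
        Finset.sum_le_sum fun i _ => (f.norm_apply_le_of_nonneg _ (hy_nonneg i)).trans
          (mul_le_mul_of_nonneg_left (hy_norm i) (norm_nonneg _))
    _ = 4 * ‖f 1‖ * ‖∑ i : Fin 4, Complex.I ^ (i : ℕ) • y i‖ := by simp [mul_assoc]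

theorem Module.End.norm_pow_apply_le_four_mul {T : Module.End ℂ A}
    (hT : ∀ a, 0 ≤ a → 0 ≤ T a) (hT₁ : T 1 = 1) (k : ℕ) (a : A) : ‖(T ^ k) a‖ ≤ 4 * ‖a‖ := by
  nontriviality A
  let f : A →ₚ[ℂ] A := .mk₀ (T ^ k) fun a ha => by
    rw [Module.End.pow_apply]
    exact Set.MapsTo.iterate (s := {a : A | 0 ≤ a}) hT k ha
  have hfa : f a = (T ^ k) a := rfl
  have hf₁ : f 1 = 1 := (Module.End.pow_apply T k 1).trans (Function.iterate_fixed hT₁ k)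
  simpa [hfa, hf₁, CStarRing.norm_one] using f.norm_apply_le_four_mul a

end CStarAlgebra

/-- Every eigenvalue of a unital positive linear map on B(H) has modulus at most 1. -/
theorem eigenvalue_modulus_le_one {n : ℕ} (Φ : Module.End ℂ (MatC n))
    (hpos : ∀ X : MatC n, X.PosSemidef → (Φ X).PosSemidef) (hunit : Φ 1 = 1)
    (c : ℂ) (X : MatC n) (hX : X ≠ 0) (heig : Φ X = c • X) :
    ‖c‖ ≤ 1 := by
  open scoped MatrixOrder Matrix.Norms.L2Operator in
  exact Module.End.HasEigenvector.norm_le_one_of_bounded_orbit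
    (Module.End.hasEigenvector_iff.mpr ⟨Module.End.mem_eigenspace_iff.mpr heig, hX⟩)
    (Module.End.norm_pow_apply_le_four_mul
      (fun A hA => (hpos A (nonneg_iff_posSemidef.mp hA)).nonneg) hunit · X)
end

section
/- If Φ is an idempotent unital completely positive map on B(H) (Φ² = Φ), then for all X, Y ∈ B(H): Φ(Φ(X)Φ(Y)) = Φ(Φ(X)Y) = Φ(XΦ(Y)). -/
open Matrix
open scoped ComplexOrder

/-! For a unital completely positive `Φ`, the Kadison–Schwarz inequality
`Φ (a* a) ≥ Φ(a)* Φ(a)` is the Schur complement of the positive block matrix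
`[Φ (cᵢ* cⱼ)]` with `c = (a, 1)`. Let `Φ b = b` and `Φ Z = 0`. For `a = b* + t Z` we get
`Φ a = b*`, so applying the positive idempotent `Φ` to the inequality gives
`t Φ (bZ + (bZ)*) + t² Φ (Z* Z) ≥ 0` for every real `t`, which forces
`Φ (bZ + (bZ)*) = 0`. Replacing `Z` by `iZ` yields `Φ (bZ) = 0`, and Hamana's identities
are the cases `Z = Φ Y - Y` and, after taking adjoints, `Z = Φ X - X`. -/

theorem Real.eq_zero_of_forall_mul_add_sq_mul_nonneg {a c : ℝ}
    (h : ∀ t : ℝ, 0 ≤ t * a + t ^ 2 * c) : a = 0 := by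
  have := discrim_le_zero (a := c) (b := a) (c := 0) fun t => by linarith [h t]
  rw [discrim] at this
  nlinarith [sq_nonneg a]

theorem Complex.eq_zero_of_forall_mul_add_sq_mul_nonneg {w v : ℂ}
    (h : ∀ t : ℝ, 0 ≤ t * w + t ^ 2 * v) : w = 0 := by
  have him (t : ℝ) : t * w.im + t ^ 2 * v.im = 0 := by
    simpa [← Complex.ofReal_pow] using (Complex.nonneg_iff.mp (h t)).2.symm
  refine Complex.ext (Real.eq_zero_of_forall_mul_add_sq_mul_nonneg (c := v.re) fun t => ?_) ?_
  · simpa [← Complex.ofReal_pow] using (Complex.nonneg_iff.mp (h t)).1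
  · have h1 := him 1
    have h2 := him (-1)
    norm_num at h1 h2 ⊢
    linarith

open scoped MatrixOrder in
theorem Matrix.eq_zero_of_forall_smul_add_sq_smul_posSemidef {ι : Type*} [Fintype ι]
    {W V : Matrix ι ι ℂ} (h : ∀ t : ℝ, (t • W + t ^ 2 • V).PosSemidef) : W = 0 := by
  have hW : W.IsHermitian := by
    have h1 := (h 1).isHermitian.eq
    have h2 := (h (-1)).isHermitian.eq
    simp only [conjTranspose_add, one_smul, one_pow, neg_smul, even_two, Even.neg_pow] at h1 h2
    have h3 := congrArg₂ (· - ·) h1 h2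
    simp only [conjTranspose_neg, add_sub_add_right_eq_sub, sub_neg_eq_add, ← two_smul ℂ] at h3
    exact smul_right_injective _ two_ne_zero h3
  have hform (x : ι → ℂ) : star x ⬝ᵥ W *ᵥ x = 0 :=
    Complex.eq_zero_of_forall_mul_add_sq_mul_nonneg fun t => by
      simpa [add_mulVec, smul_mulVec, dotProduct_add, dotProduct_smul] using
        (h t).dotProduct_mulVec_nonneg x
  refine le_antisymm ?_ ?_
  · rw [le_iff, zero_sub]
    exact .of_dotProduct_mulVec_nonneg hW.neg fun x => by simp [neg_mulVec, hform]
  · rw [le_iff, sub_zero]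
    exact .of_dotProduct_mulVec_nonneg hW fun x => (hform x).ge

def sumSelfEquivProdFinTwo (α : Type*) : α ⊕ α ≃ α × Fin 2 where
  toFun := Sum.elim (fun i => (i, 0)) (fun i => (i, 1))
  invFun p := if p.2 = 0 then Sum.inl p.1 else Sum.inr p.1
  left_inv := by rintro (i | i) <;> simp
  right_inv := by rintro ⟨i, s⟩; fin_cases s <;> simp

namespace IsCompletelyPositive

variable {n : ℕ} {Φ : Module.End ℂ (MatC n)}

theorem posSemidef_map (hCP : IsCompletelyPositive Φ) {A : MatC n} (hA : A.PosSemidef) :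
    (Φ A).PosSemidef :=
  (hCP 1 _ (hA.submatrix Prod.fst)).submatrix fun i => (i, 0)

theorem posSemidef_gram (hCP : IsCompletelyPositive Φ) {k : ℕ} (c : Fin k → MatC n) :
    (Matrix.of fun p q : Fin n × Fin k => Φ ((c p.2)ᴴ * c q.2) p.1 q.1).PosSemidef :=
  hCP k _ (posSemidef_conjTranspose_mul_self
    (Matrix.of fun i p => c p.2 i p.1 : Matrix (Fin n) (Fin n × Fin k) ℂ))

theorem map_conjTranspose (hCP : IsCompletelyPositive Φ) (a : MatC n) : Φ aᴴ = (Φ a)ᴴ := by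
  ext i j
  have h := congrFun (congrFun (hCP.posSemidef_gram ![a, 1]).isHermitian.eq (j, 1)) (i, 0)
  simpa using congrArg star h

theorem kadison_schwarz (hCP : IsCompletelyPositive Φ) (hunit : Φ 1 = 1) (a : MatC n) :
    (Φ (aᴴ * a) - (Φ a)ᴴ * Φ a).PosSemidef := by
  have hblock := (hCP.posSemidef_gram ![a, 1]).submatrix (sumSelfEquivProdFinTwo (Fin n))
  have hblocks :
      (Matrix.of fun p q : Fin n × Fin 2 => Φ ((![a, 1] p.2)ᴴ * ![a, 1] q.2) p.1 q.1).submatrix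
        (sumSelfEquivProdFinTwo (Fin n)) (sumSelfEquivProdFinTwo (Fin n))
      = fromBlocks (Φ (aᴴ * a)) (Φ a)ᴴ (Φ a) 1 := by
    ext (i | i) (j | j) <;> simp [sumSelfEquivProdFinTwo, hCP.map_conjTranspose, hunit]
  rw [hblocks] at hblock
  let : Invertible (1 : MatC n) := invertibleOne
  simpa using (PosDef.fromBlocks₂₂ _ (Φ a)ᴴ PosDef.one).mp (by simpa using hblock)

theorem map_mul_add_conjTranspose_eq_zero (hCP : IsCompletelyPositive Φ) (hunit : Φ 1 = 1)
    (hidem : ∀ X : MatC n, Φ (Φ X) = Φ X) {b Z : MatC n} (hb : Φ b = b) (hZ : Φ Z = 0) :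
    Φ (b * Z + (b * Z)ᴴ) = 0 := by
  have hbH : Φ bᴴ = bᴴ := by rw [hCP.map_conjTranspose, hb]
  refine eq_zero_of_forall_smul_add_sq_smul_posSemidef (V := Φ (Zᴴ * Z)) fun t => ?_
  have hmap : Φ (bᴴ + t • Z) = bᴴ := by
    rw [map_add, LinearMap.map_smul_of_tower, hZ, smul_zero, add_zero, hbH]
  have hexpand : (bᴴ + t • Z)ᴴ * (bᴴ + t • Z)
      = b * bᴴ + t • (b * Z + (b * Z)ᴴ) + t ^ 2 • (Zᴴ * Z) := by
    simp only [conjTranspose_add, conjTranspose_smul, conjTranspose_conjTranspose,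
      conjTranspose_mul, star_trivial, add_mul, mul_add, smul_mul_assoc, mul_smul_comm,
      smul_smul, smul_add, sq]
    abel
  have h := hCP.posSemidef_map (hCP.kadison_schwarz hunit (bᴴ + t • Z))
  rwa [map_sub, hidem, hmap, conjTranspose_conjTranspose, hexpand, map_add, map_add,
    LinearMap.map_smul_of_tower, LinearMap.map_smul_of_tower, add_assoc, add_sub_cancel_left] at h

theorem map_mul_eq_zero_of_map_eq_self_of_map_eq_zero (hCP : IsCompletelyPositive Φ)
    (hunit : Φ 1 = 1) (hidem : ∀ X : MatC n, Φ (Φ X) = Φ X) {b Z : MatC n} (hb : Φ b = b)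
    (hZ : Φ Z = 0) : Φ (b * Z) = 0 := by
  have hreal := hCP.map_mul_add_conjTranspose_eq_zero hunit hidem hb hZ
  have himag := hCP.map_mul_add_conjTranspose_eq_zero hunit hidem hb
    (Z := Complex.I • Z) (by rw [map_smul, hZ, smul_zero])
  rw [map_add, hCP.map_conjTranspose] at hreal himag
  rw [mul_smul_comm, map_smul, conjTranspose_smul, Complex.star_def, Complex.conj_I,
    eq_neg_of_add_eq_zero_right hreal, smul_neg, neg_smul, neg_neg, ← two_smul ℂ,
    smul_smul] at himag
  exact (smul_eq_zero.mp himag).resolve_left (by simp)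

theorem map_mul_eq_zero_of_map_eq_zero_of_map_eq_self (hCP : IsCompletelyPositive Φ)
    (hunit : Φ 1 = 1) (hidem : ∀ X : MatC n, Φ (Φ X) = Φ X) {Z b : MatC n} (hZ : Φ Z = 0)
    (hb : Φ b = b) : Φ (Z * b) = 0 := by
  have h := hCP.map_mul_eq_zero_of_map_eq_self_of_map_eq_zero hunit hidem (b := bᴴ) (Z := Zᴴ)
    (by rw [hCP.map_conjTranspose, hb]) (by rw [hCP.map_conjTranspose, hZ, conjTranspose_zero])
  rwa [← conjTranspose_mul, hCP.map_conjTranspose, conjTranspose_eq_zero] at h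

end IsCompletelyPositive

/-- Hamana's lemma: for an idempotent UCP map Φ,
Φ(Φ(X)Φ(Y)) = Φ(Φ(X)Y) = Φ(XΦ(Y)). -/
theorem hamana_lemma {n : ℕ} (Φ : Module.End ℂ (MatC n))
    (hCP : IsCompletelyPositive Φ) (hunit : Φ 1 = 1)
    (hidem : ∀ X : MatC n, Φ (Φ X) = Φ X) (X Y : MatC n) :
    Φ (Φ X * Φ Y) = Φ (Φ X * Y) ∧ Φ (Φ X * Y) = Φ (X * Φ Y) := by
  have hker (A : MatC n) : Φ (Φ A - A) = 0 := by rw [map_sub, hidem, sub_self]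
  have hleft : Φ (Φ X * Φ Y) = Φ (Φ X * Y) := by
    rw [← sub_eq_zero, ← map_sub, ← mul_sub]
    exact hCP.map_mul_eq_zero_of_map_eq_self_of_map_eq_zero hunit hidem (hidem X) (hker Y)
  have hright : Φ (Φ X * Φ Y) = Φ (X * Φ Y) := by
    rw [← sub_eq_zero, ← map_sub, ← sub_mul]
    exact hCP.map_mul_eq_zero_of_map_eq_zero_of_map_eq_self hunit hidem (hker X) (hidem Y)
  exact ⟨hleft, hleft ▸ hright⟩
end

section
/- If Φ is a faithful unital completely positive map on B(H) (there exists a positive definite ρ with Φ†(ρ) = ρ), then its attractor subspace equals its decoherence-free algebra: Attr(Φ) = N. -/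
open Matrix
open scoped ComplexOrder

/-- The decoherence-free algebra of Φ. -/
def decFree {n : ℕ} (Φ : Module.End ℂ (MatC n)) : Set (MatC n) :=
  {X | ∀ (m : ℕ) (Y : MatC n), (Φ ^ m) (Y * X) = (Φ ^ m) Y * (Φ ^ m) X ∧
        (Φ ^ m) (X * Y) = (Φ ^ m) X * (Φ ^ m) Y}

/-- The attractor subspace: span of peripheral (unimodular) eigenvectors. -/
noncomputable def attr {n : ℕ} (Φ : Module.End ℂ (MatC n)) : Submodule ℂ (MatC n) :=
  Submodule.span ℂ {X | ∃ c : ℂ, ‖c‖ = 1 ∧ Φ X = c • X}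

/-- Faithfulness: existence of a full-rank stationary state for the
Hilbert-Schmidt adjoint of Φ. -/
def IsFaithful {n : ℕ} (Φ : Module.End ℂ (MatC n)) : Prop :=
  ∃ ρ : MatC n, ρ.PosDef ∧ ρ.trace = 1 ∧ ∀ A : MatC n, (Φ A * ρ).trace = (A * ρ).trace

/-!
Write `Φ` in Kraus form `Φ A = ∑ᵣ Kᵣᴴ A Kᵣ`, read off from its Choi matrix. Weighting the
Hilbert–Schmidt norm by the stationary state, `‖A‖² = tr (A ρ Aᴴ)`, unitality and `Φ†ρ = ρ` give

  `‖A‖² - ‖Φ A‖² = ∑ᵣ ‖A Kᵣ - Kᵣ Φ(A)‖²`,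

so `Φ` is a contraction, and when `Φ` preserves the norm of `X` we get `X Kᵣ = Kᵣ Φ(X)`, hence
`Φ(Y X) = Φ(Y) Φ(X)` for all `Y`. A peripheral eigenvector `X` (and `Xᴴ`, also one) has its norm
preserved, so it lies in the multiplicative domain of `Φ` and, iterating, in `N`.
Conversely, `X ∈ N` has `‖Φᵐ X‖ = ‖X‖` for all `m`. The vectors with this property form a
subspace on which `Φ` is an isometry, and an isometry of a finite-dimensional Hilbert space is
semisimple with unimodular eigenvalues, so `X` is in the span of the peripheral eigenvectors.
-/

section Isometry

variable {𝕜 E : Type*} [RCLike 𝕜] [NormedAddCommGroup E] [InnerProductSpace 𝕜 E]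

def Module.End.unimodularEigenvectors {V : Type*} [AddCommGroup V] [Module 𝕜 V]
    (f : Module.End 𝕜 V) : Set V :=
  {v | ∃ c : 𝕜, ‖c‖ = 1 ∧ f v = c • v}

lemma Module.End.orthogonal_mem_invtSubmodule_of_norm_map [FiniteDimensional 𝕜 E]
    {U : Module.End 𝕜 E} (hU : ∀ v, ‖U v‖ = ‖v‖) {p : Submodule 𝕜 E}
    (hp : p ∈ U.invtSubmodule) : pᗮ ∈ U.invtSubmodule := by
  let V : E →ₗᵢ[𝕜] E := { U with norm_map' := hU }
  have hsurj : Function.Surjective (U.restrict hp) :=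
    LinearMap.injective_iff_surjective.mp fun a b hab ↦
      Subtype.ext (V.injective (congrArg Subtype.val hab))
  intro x hx y hy
  obtain ⟨z, hz⟩ := hsurj ⟨y, hy⟩
  obtain rfl : U z = y := congrArg Subtype.val hz
  exact (V.inner_map_map z x).trans (hx z z.2)

lemma Module.End.isSemisimple_of_norm_map [FiniteDimensional 𝕜 E]
    {U : Module.End 𝕜 E} (hU : ∀ v, ‖U v‖ = ‖v‖) : U.IsSemisimple :=
  isSemisimple_iff.mpr fun p hp ↦
    ⟨pᗮ, orthogonal_mem_invtSubmodule_of_norm_map hU hp, p.isCompl_orthogonal⟩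

lemma Module.End.norm_eq_one_of_norm_map {U : Module.End 𝕜 E} (hU : ∀ v, ‖U v‖ = ‖v‖)
    {μ : 𝕜} {v : E} (hv : U.HasEigenvector μ v) : ‖μ‖ = 1 := by
  have := hU v
  rw [hv.apply_eq_smul, norm_smul] at this
  exact (mul_eq_right₀ (norm_ne_zero_iff.mpr hv.2)).mp this

lemma Module.End.span_unimodularEigenvectors_eq_top [IsAlgClosed 𝕜] [FiniteDimensional 𝕜 E]
    {U : Module.End 𝕜 E} (hU : ∀ v, ‖U v‖ = ‖v‖) :
    Submodule.span 𝕜 U.unimodularEigenvectors = ⊤ := by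
  rw [eq_top_iff, ← U.iSup_maxGenEigenspace_eq_top, iSup_le_iff]
  intro μ v hv
  rw [(isSemisimple_of_norm_map hU).isFinitelySemisimple.maxGenEigenspace_eq_eigenspace] at hv
  rcases eq_or_ne v 0 with rfl | hv0
  · exact Submodule.zero_mem _
  · exact Submodule.subset_span ⟨μ, norm_eq_one_of_norm_map hU ⟨hv, hv0⟩, mem_eigenspace_iff.mp hv⟩

/-- A subspace because `‖v‖² - ‖T v‖²` is a nonnegative form obeying the parallelogram law. -/
def Module.End.normEqSubmodule (T : Module.End 𝕜 E) (hT : ∀ v, ‖T v‖ ≤ ‖v‖) :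
    Submodule 𝕜 E where
  carrier := {v | ‖T v‖ = ‖v‖}
  zero_mem' := by simp
  add_mem' {u v} hu hv := by
    have hpar := parallelogram_law_with_norm 𝕜 u v
    have hTpar := parallelogram_law_with_norm 𝕜 (T u) (T v)
    rw [hu, hv, ← map_add, ← map_sub] at hTpar
    have hadd := hT (u + v)
    have hsub := hT (u - v)
    show ‖T (u + v)‖ = ‖u + v‖
    nlinarith [norm_nonneg (T (u + v)), norm_nonneg (T (u - v))]
  smul_mem' c v hv := by
    show ‖T (c • v)‖ = ‖c • v‖
    rw [map_smul, norm_smul, norm_smul, hv]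

lemma Module.End.norm_pow_apply_le {T : Module.End 𝕜 E} (hT : ∀ v, ‖T v‖ ≤ ‖v‖) (m : ℕ)
    (v : E) : ‖(T ^ m) v‖ ≤ ‖v‖ := by
  induction m generalizing v with
  | zero => simp
  | succ m ih =>
    rw [pow_succ, Module.End.mul_apply]
    exact (ih (T v)).trans (hT v)

theorem Module.End.mem_span_unimodularEigenvectors_of_norm_pow_apply [IsAlgClosed 𝕜]
    [FiniteDimensional 𝕜 E] {T : Module.End 𝕜 E} (hT : ∀ v, ‖T v‖ ≤ ‖v‖) {x : E}
    (hx : ∀ m : ℕ, ‖(T ^ m) x‖ = ‖x‖) : x ∈ Submodule.span 𝕜 T.unimodularEigenvectors := by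
  let W := ⨅ m : ℕ, (T ^ m).normEqSubmodule (norm_pow_apply_le hT m)
  have mem_W {v : E} : v ∈ W ↔ ∀ m : ℕ, ‖(T ^ m) v‖ = ‖v‖ := Submodule.mem_iInf _
  have hW : ∀ v ∈ W, T v ∈ W := fun v hv ↦ mem_W.mpr fun m ↦ by
    rw [← Module.End.mul_apply, ← pow_succ, mem_W.mp hv, ← mem_W.mp hv 1, pow_one]
  let U : Module.End 𝕜 W := T.restrict hW
  have hU (w : W) : ‖U w‖ = ‖w‖ := by simpa [U] using mem_W.mp w.2 1
  have hxU : (⟨x, mem_W.mpr hx⟩ : W) ∈ Submodule.span 𝕜 U.unimodularEigenvectors := by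
    rw [span_unimodularEigenvectors_eq_top hU]; trivial
  have := Submodule.mem_map_of_mem (f := W.subtype) hxU
  rw [Submodule.map_span] at this
  refine Submodule.span_mono ?_ this
  rintro _ ⟨w, ⟨c, hc, hw⟩, rfl⟩
  exact ⟨c, hc, congrArg Subtype.val hw⟩

end Isometry

section Eigenvector

variable {R A : Type*} [CommSemiring R] [Semiring A] [Algebra R A] {f : Module.End R A} {x : A}
  {c : R}

lemma Module.End.pow_apply_mul_eigenvector (hx : f x = c • x)
    (hmul : ∀ y, f (y * x) = f y * f x) (k : ℕ) (y : A) :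
    (f ^ k) (y * x) = (f ^ k) y * (f ^ k) x := by
  induction k generalizing y with
  | zero => rfl
  | succ k ih => simp only [pow_succ, Module.End.mul_apply, hmul, hx, mul_smul_comm, map_smul, ih]

lemma Module.End.pow_apply_eigenvector_mul (hx : f x = c • x)
    (hmul : ∀ y, f (x * y) = f x * f y) (k : ℕ) (y : A) :
    (f ^ k) (x * y) = (f ^ k) x * (f ^ k) y := by
  induction k generalizing y with
  | zero => rfl
  | succ k ih => simp only [pow_succ, Module.End.mul_apply, hmul, hx, smul_mul_assoc, map_smul, ih]

end Eigenvector

lemma IsCompletelyPositive.posSemidef_choi {n : ℕ} {Φ : Module.End ℂ (MatC n)}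
    (hCP : IsCompletelyPositive Φ) :
    (of fun p q : Fin n × Fin n ↦ Φ (single p.2 q.2 1) p.1 q.1).PosSemidef := by
  -- the unnormalised maximally entangled vector
  let Ω : Fin n × Fin n → ℂ := fun p ↦ if p.1 = p.2 then 1 else 0
  have hsingle (a b : Fin n) :
      (of fun i j ↦ vecMulVec Ω (star Ω) (i, a) (j, b)) = single a b 1 := by
    ext i j
    simp only [Ω, vecMulVec_apply, single_apply, of_apply, Pi.star_apply]
    split_ifs <;> simp_all
  simpa only [hsingle] using hCP n _ (posSemidef_vecMulVec_self_star Ω)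

lemma IsCompletelyPositive.exists_kraus {n : ℕ} {Φ : Module.End ℂ (MatC n)}
    (hCP : IsCompletelyPositive Φ) :
    ∃ (m : ℕ) (K : Fin m → MatC n), ∀ A, Φ A = ∑ r, (K r)ᴴ * A * K r := by
  obtain ⟨m, v, hv⟩ := posSemidef_iff_eq_sum_vecMulVec.mp hCP.posSemidef_choi
  let K (r : Fin m) : MatC n := of fun x p ↦ star (v r (p, x))
  have hΦ : Φ = ∑ r, LinearMap.mulLeft ℂ (K r)ᴴ ∘ₗ LinearMap.mulRight ℂ (K r) := by
    refine (stdBasis ℂ (Fin n) (Fin n)).ext fun ⟨x, y⟩ ↦ ?_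
    ext p q
    have hchoi := congr_fun₂ hv (p, x) (q, y)
    simp only [of_apply] at hchoi
    simp [stdBasis_eq_single, hchoi, K, Matrix.sum_apply, vecMulVec_apply, mul_apply, single_apply,
      ite_and, Finset.sum_ite_eq, mul_ite]
  exact ⟨m, K, fun A ↦ by simp [hΦ, mul_assoc]⟩

section Kraus

variable {m ι : Type*} [Fintype m] [Fintype ι] {Φ : Module.End ℂ (Matrix m m ℂ)}
  {K : ι → Matrix m m ℂ} {ρ : Matrix m m ℂ}

lemma map_conjTranspose_of_kraus (hK : ∀ A, Φ A = ∑ r, (K r)ᴴ * A * K r) (A : Matrix m m ℂ) :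
    Φ Aᴴ = (Φ A)ᴴ := by
  simp [hK, conjTranspose_sum, mul_assoc]

lemma map_conjTranspose_mul_self_sub_of_kraus [DecidableEq m]
    (hK : ∀ A, Φ A = ∑ r, (K r)ᴴ * A * K r) (hunit : Φ 1 = 1) (A : Matrix m m ℂ) :
    Φ (Aᴴ * A) - (Φ A)ᴴ * Φ A =
      ∑ r, (A * K r - K r * Φ A)ᴴ * (A * K r - K r * Φ A) := by
  have hsum : ∑ r, (K r)ᴴ * K r = 1 := by simpa [hK] using hunit
  have expand (r : ι) : (A * K r - K r * Φ A)ᴴ * (A * K r - K r * Φ A) =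
      (K r)ᴴ * (Aᴴ * A) * K r - (K r)ᴴ * Aᴴ * K r * Φ A
        - (Φ A)ᴴ * ((K r)ᴴ * A * K r) + (Φ A)ᴴ * ((K r)ᴴ * K r) * Φ A := by
    simp only [conjTranspose_sub, conjTranspose_mul]
    noncomm_ring
  simp only [expand, Finset.sum_add_distrib, Finset.sum_sub_distrib, ← Finset.sum_mul,
    ← Finset.mul_sum, ← hK, hsum, map_conjTranspose_of_kraus hK]
  noncomm_ring

lemma trace_mul_mul_conjTranspose_sub_map_of_kraus [DecidableEq m]
    (hK : ∀ A, Φ A = ∑ r, (K r)ᴴ * A * K r) (hunit : Φ 1 = 1)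
    (hstat : ∀ A, (Φ A * ρ).trace = (A * ρ).trace) (A : Matrix m m ℂ) :
    (A * ρ * Aᴴ).trace - (Φ A * ρ * (Φ A)ᴴ).trace =
      ∑ r, ((A * K r - K r * Φ A) * ρ * (A * K r - K r * Φ A)ᴴ).trace := by
  simp only [trace_mul_cycle _ ρ, ← hstat (Aᴴ * A), ← trace_sub, ← Matrix.sub_mul,
    map_conjTranspose_mul_self_sub_of_kraus hK hunit, Finset.sum_mul, trace_sum]

lemma Matrix.PosDef.trace_mul_mul_conjTranspose_eq_zero_iff (hρ : ρ.PosDef)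
    {A : Matrix m m ℂ} : (A * ρ * Aᴴ).trace = 0 ↔ A = 0 := by
  let := ρ.toMatrixNormedAddCommGroup hρ
  let := ρ.toMatrixInnerProductSpace hρ.posSemidef
  exact inner_self_eq_zero (𝕜 := ℂ) (x := A)

lemma mul_kraus_eq_of_trace_map_eq [DecidableEq m] (hK : ∀ A, Φ A = ∑ r, (K r)ᴴ * A * K r)
    (hunit : Φ 1 = 1) (hρ : ρ.PosDef) (hstat : ∀ A, (Φ A * ρ).trace = (A * ρ).trace)
    {X : Matrix m m ℂ} (hX : (Φ X * ρ * (Φ X)ᴴ).trace = (X * ρ * Xᴴ).trace) (r : ι) :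
    X * K r = K r * Φ X := by
  have hsum := trace_mul_mul_conjTranspose_sub_map_of_kraus hK hunit hstat X
  rw [hX, sub_self, eq_comm, Finset.sum_eq_zero_iff_of_nonneg fun r _ ↦
    (hρ.posSemidef.mul_mul_conjTranspose_same _).trace_nonneg] at hsum
  exact sub_eq_zero.mp (hρ.trace_mul_mul_conjTranspose_eq_zero_iff.mp (hsum r (Finset.mem_univ r)))

lemma map_mul_of_trace_map_eq [DecidableEq m] (hK : ∀ A, Φ A = ∑ r, (K r)ᴴ * A * K r)
    (hunit : Φ 1 = 1) (hρ : ρ.PosDef) (hstat : ∀ A, (Φ A * ρ).trace = (A * ρ).trace)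
    {X : Matrix m m ℂ} (hX : (Φ X * ρ * (Φ X)ᴴ).trace = (X * ρ * Xᴴ).trace) (Y : Matrix m m ℂ) :
    Φ (Y * X) = Φ Y * Φ X := by
  simp only [hK (Y * X), hK Y, Finset.sum_mul, mul_assoc,
    mul_kraus_eq_of_trace_map_eq hK hunit hρ hstat hX]

end Kraus

lemma trace_smul_mul_mul_conjTranspose_smul {m : Type*} [Fintype m] {c : ℂ} (hc : ‖c‖ = 1)
    (X ρ : Matrix m m ℂ) : ((c • X) * ρ * (c • X)ᴴ).trace = (X * ρ * Xᴴ).trace := by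
  simp [← mul_assoc, Complex.conj_mul', hc]

section DecoherenceFree

variable {n m : ℕ} {Φ : Module.End ℂ (MatC n)} {K : Fin m → MatC n} {ρ : MatC n}

def decFreeSubmodule (Φ : Module.End ℂ (MatC n)) : Submodule ℂ (MatC n) where
  carrier := decFree Φ
  zero_mem' k Y := by simp
  add_mem' {X Z} hX hZ k Y := by
    simp only [mul_add, add_mul, map_add, (hX k Y).1, (hZ k Y).1, (hX k Y).2, (hZ k Y).2,
      and_self]
  smul_mem' c X hX k Y := by
    simp only [mul_smul_comm, smul_mul_assoc, map_smul, (hX k Y).1, (hX k Y).2, and_self]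

lemma mem_decFree_of_eigenvector (hK : ∀ A, Φ A = ∑ r, (K r)ᴴ * A * K r) (hunit : Φ 1 = 1)
    (hρ : ρ.PosDef) (hstat : ∀ A, (Φ A * ρ).trace = (A * ρ).trace) {X : MatC n} {c : ℂ}
    (hc : ‖c‖ = 1) (hX : Φ X = c • X) : X ∈ decFree Φ := by
  have hX' : Φ Xᴴ = star c • Xᴴ := by
    rw [map_conjTranspose_of_kraus hK, hX, conjTranspose_smul]
  have hmul_right := map_mul_of_trace_map_eq hK hunit hρ hstat
    (hX ▸ trace_smul_mul_mul_conjTranspose_smul hc X ρ)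
  have hmul_left (Y : MatC n) : Φ (X * Y) = Φ X * Φ Y := by
    have := map_mul_of_trace_map_eq hK hunit hρ hstat
      (hX' ▸ trace_smul_mul_mul_conjTranspose_smul (by rwa [norm_star]) Xᴴ ρ) Yᴴ
    simpa only [← conjTranspose_mul, map_conjTranspose_of_kraus hK, conjTranspose_inj] using this
  exact fun k Y ↦ ⟨Module.End.pow_apply_mul_eigenvector hX hmul_right k Y,
    Module.End.pow_apply_eigenvector_mul hX hmul_left k Y⟩

lemma attr_le_decFreeSubmodule (hK : ∀ A, Φ A = ∑ r, (K r)ᴴ * A * K r) (hunit : Φ 1 = 1)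
    (hρ : ρ.PosDef) (hstat : ∀ A, (Φ A * ρ).trace = (A * ρ).trace) :
    attr Φ ≤ decFreeSubmodule Φ :=
  Submodule.span_le.mpr fun _ ⟨_, hc, hX⟩ ↦ mem_decFree_of_eigenvector hK hunit hρ hstat hc hX

lemma trace_pow_map_mul (hstat : ∀ A, (Φ A * ρ).trace = (A * ρ).trace) (k : ℕ) (A : MatC n) :
    ((Φ ^ k) A * ρ).trace = (A * ρ).trace := by
  induction k generalizing A with
  | zero => rfl
  | succ k ih => rw [pow_succ, Module.End.mul_apply, ih, hstat]

lemma trace_pow_map_mul_mul_conjTranspose_of_mem_decFree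
    (hK : ∀ A, Φ A = ∑ r, (K r)ᴴ * A * K r) (hstat : ∀ A, (Φ A * ρ).trace = (A * ρ).trace)
    {X : MatC n} (hX : X ∈ decFree Φ) (k : ℕ) :
    ((Φ ^ k) X * ρ * ((Φ ^ k) X)ᴴ).trace = (X * ρ * Xᴴ).trace := by
  have hstar : Function.Commute (Φ ^ k) conjTranspose := by
    rw [Module.End.coe_pow]
    exact Function.Commute.iterate_left (map_conjTranspose_of_kraus hK) k
  rw [trace_mul_cycle, ← hstar X, ← (hX k Xᴴ).1, trace_pow_map_mul hstat, ← trace_mul_cycle]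

lemma mem_attr_of_trace_pow_map_mul_mul_conjTranspose_eq
    (hK : ∀ A, Φ A = ∑ r, (K r)ᴴ * A * K r) (hunit : Φ 1 = 1) (hρ : ρ.PosDef)
    (hstat : ∀ A, (Φ A * ρ).trace = (A * ρ).trace) {X : MatC n}
    (hX : ∀ k : ℕ, ((Φ ^ k) X * ρ * ((Φ ^ k) X)ᴴ).trace = (X * ρ * Xᴴ).trace) :
    X ∈ attr Φ := by
  let := ρ.toMatrixNormedAddCommGroup hρ
  let := ρ.toMatrixInnerProductSpace hρ.posSemidef
  have norm_sq (A : MatC n) : ‖A‖ ^ 2 = (A * ρ * Aᴴ).trace.re := norm_sq_eq_re_inner (𝕜 := ℂ) A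
  refine Module.End.mem_span_unimodularEigenvectors_of_norm_pow_apply (fun A ↦ ?_) fun k ↦ ?_
  · have hdefect : 0 ≤ ‖A‖ ^ 2 - ‖Φ A‖ ^ 2 := by
      have hsum := trace_mul_mul_conjTranspose_sub_map_of_kraus hK hunit hstat A
      rw [norm_sq, norm_sq, ← Complex.sub_re, hsum]
      exact (Complex.nonneg_iff.mp (Finset.sum_nonneg fun r _ ↦
        (hρ.posSemidef.mul_mul_conjTranspose_same _).trace_nonneg)).1
    exact (pow_le_pow_iff_left₀ (norm_nonneg _) (norm_nonneg _) two_ne_zero).mp (by linarith)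
  · exact (pow_left_inj₀ (norm_nonneg _) (norm_nonneg _) two_ne_zero).mp
      (by simp only [norm_sq, hX])

end DecoherenceFree

/-- For a faithful UCP map the attractor subspace coincides with the
decoherence-free algebra. -/
theorem attr_eq_decFree_of_faithful {n : ℕ} (Φ : Module.End ℂ (MatC n))
    (hCP : IsCompletelyPositive Φ) (hunit : Φ 1 = 1) (hfaith : IsFaithful Φ) :
    (attr Φ : Set (MatC n)) = decFree Φ := by
  obtain ⟨ρ, hρ, -, hstat⟩ := hfaith
  obtain ⟨m, K, hK⟩ := hCP.exists_kraus
  refine subset_antisymm (attr_le_decFreeSubmodule hK hunit hρ hstat) fun X hX ↦ ?_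
  exact mem_attr_of_trace_pow_map_mul_mul_conjTranspose_eq hK hunit hρ hstat
    (trace_pow_map_mul_mul_conjTranspose_of_mem_decFree hK hstat hX)
end

section
/- Let (Φ_t)_{t≥0} be a quantum dynamical semigroup on B(H) with GKLS generator L(X) = i[H₀,X] + Σ_k (L_k* X L_k − ½{L_k*L_k, X}). Then the decoherence-free algebra N of the semigroup is contained in {X ∈ B(H) | Φ_t(X) = e^{itH₀} X e^{−itH₀} for all t ≥ 0}. -/
abbrev HS (n : ℕ) := EuclideanSpace ℂ (Fin n)
abbrev BH (n : ℕ) := HS n →L[ℂ] HS n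

/-- `Lgen` is a GKLS generator with (effective) Hamiltonian `H₀` and jump operators `L`. -/
def IsGKLS {n m : ℕ} (Lgen : Module.End ℂ (BH n)) (H₀ : BH n) (L : Fin m → BH n) : Prop :=
  IsSelfAdjoint H₀ ∧ ∀ X : BH n,
    Lgen X = Complex.I • (H₀ * X - X * H₀) +
      ∑ k, (star (L k) * X * L k -
        (2⁻¹ : ℂ) • (star (L k) * L k * X + X * (star (L k) * L k)))

/-!
Differentiating `Φ t (Y * X) = Φ t Y * Φ t X` from the right at `t` shows that the generator acts
as a derivation on the pairs `(Φ t Y, Φ t X)` and `(Φ t X, Φ t Y)`. The failure of a GKLS generator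
to be a derivation is `∑ k, [L k⋆, A] * [B, L k]`. Since `Φ t` commutes with the adjoint, the choice
`Y = X⋆` turns this into `∑ k, C k⋆ * C k` with `C k = [Φ t X, L k]`, resp. `∑ k, C k * C k⋆` with
`C k = [L k⋆, Φ t X]`, and in a C⋆-algebra such a sum vanishes only if every `C k` does. Hence
`Φ t X` commutes with all `L k` and `L k⋆`, the dissipator vanishes on it, and `t ↦ Φ t X` solves
the Heisenberg equation `Ẋ = i [H₀, X]`, whose unique solution is `e^{itH₀} X e^{-itH₀}`.
-/

open NormedSpace Set

section Lindbladian

variable {A : Type*} [Ring A] [StarRing A] [Algebra ℂ A] {ι : Type*} [Fintype ι]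

noncomputable def dissipator (J : A) : A →ₗ[ℂ] A where
  toFun X := star J * X * J - (2⁻¹ : ℂ) • (star J * J * X + X * (star J * J))
  map_add' X Y := by simp only [mul_add, add_mul, smul_add]; abel
  map_smul' c X := by simp only [mul_smul_comm, smul_mul_assoc, RingHom.id_apply]; module

noncomputable def lindbladian (H₀ : A) (L : ι → A) : A →ₗ[ℂ] A :=
  Complex.I • (LinearMap.mulLeft ℂ H₀ - LinearMap.mulRight ℂ H₀) + ∑ k, dissipator (L k)

theorem dissipator_apply (J X : A) :
    dissipator J X = star J * X * J - (2⁻¹ : ℂ) • (star J * J * X + X * (star J * J)) :=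
  rfl

theorem lindbladian_apply (H₀ : A) (L : ι → A) (X : A) :
    lindbladian H₀ L X = Complex.I • (H₀ * X - X * H₀) + ∑ k, dissipator (L k) X := by
  simp [lindbladian]

theorem dissipator_mul_sub (J X Y : A) :
    dissipator J (X * Y) - dissipator J X * Y - X * dissipator J Y =
      (star J * X - X * star J) * (Y * J - J * Y) := by
  simp only [dissipator_apply, mul_add, add_mul, mul_sub, sub_mul, smul_add, smul_mul_assoc,
    mul_smul_comm, mul_assoc]
  module

theorem lindbladian_mul_sub (H₀ : A) (L : ι → A) (X Y : A) :
    lindbladian H₀ L (X * Y) - lindbladian H₀ L X * Y - X * lindbladian H₀ L Y =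
      ∑ k, (star (L k) * X - X * star (L k)) * (Y * L k - L k * Y) := by
  have hamiltonian : Complex.I • (H₀ * (X * Y) - X * Y * H₀) -
      Complex.I • (H₀ * X - X * H₀) * Y - X * Complex.I • (H₀ * Y - Y * H₀) = 0 := by
    simp only [mul_sub, sub_mul, smul_mul_assoc, mul_smul_comm, mul_assoc]
    module
  simp only [lindbladian_apply, add_mul, mul_add, Finset.sum_mul, Finset.mul_sum,
    ← dissipator_mul_sub, Finset.sum_sub_distrib]
  rw [← sub_eq_zero, ← hamiltonian]
  abel

theorem lindbladian_star [StarModule ℂ A] {H₀ : A} (hH : IsSelfAdjoint H₀) (L : ι → A) (X : A) :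
    lindbladian H₀ L (star X) = star (lindbladian H₀ L X) := by
  simp only [lindbladian_apply, dissipator_apply, star_add, star_smul, star_sub, star_mul,
    star_star, star_sum, hH.star_eq, Complex.star_def, Complex.conj_I, map_inv₀,
    Complex.conj_ofNat, mul_assoc]
  congr 1
  · module
  · refine Finset.sum_congr rfl fun k _ => ?_
    rw [add_comm (star X * _)]

theorem dissipator_eq_zero_of_commute {J X : A} (hJ : Commute X J) (hJ' : Commute X (star J)) :
    dissipator J X = 0 := by
  have h₁ : star J * X * J = star J * J * X := by rw [mul_assoc, hJ.eq, ← mul_assoc]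
  have h₂ : X * (star J * J) = star J * J * X := by
    rw [← mul_assoc, hJ'.eq, mul_assoc, hJ.eq, ← mul_assoc]
  rw [dissipator_apply, h₁, h₂, ← two_smul ℂ, smul_smul]
  norm_num

theorem lindbladian_eq_of_commute (H₀ : A) (L : ι → A) {X : A} (hL : ∀ k, Commute X (L k))
    (hL' : ∀ k, Commute X (star (L k))) :
    lindbladian H₀ L X = Complex.I • (H₀ * X - X * H₀) := by
  simp [lindbladian_apply, dissipator_eq_zero_of_commute (hL _) (hL' _)]

end Lindbladian

theorem CStarRing.eq_zero_of_sum_star_mul_self_eq_zero {A : Type*} [NonUnitalNormedRing A]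
    [StarRing A] [CStarRing A] [PartialOrder A] [StarOrderedRing A] {ι : Type*} {s : Finset ι}
    {C : ι → A} (h : ∑ k ∈ s, star (C k) * C k = 0) {k : ι} (hk : k ∈ s) : C k = 0 :=
  CStarRing.star_mul_self_eq_zero_iff _ |>.mp <|
    (Finset.sum_eq_zero_iff_of_nonneg fun j _ => star_mul_self_nonneg (C j)).mp h k hk

theorem lindbladian_eq_of_derivation_star {A : Type*} [CStarAlgebra A] [PartialOrder A]
    [StarOrderedRing A] {ι : Type*} [Fintype ι] (H₀ : A) (L : ι → A) {B : A}
    (h₁ : lindbladian H₀ L (star B * B) =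
      lindbladian H₀ L (star B) * B + star B * lindbladian H₀ L B)
    (h₂ : lindbladian H₀ L (B * star B) =
      lindbladian H₀ L B * star B + B * lindbladian H₀ L (star B)) :
    lindbladian H₀ L B = Complex.I • (H₀ * B - B * H₀) := by
  refine lindbladian_eq_of_commute H₀ L (fun k => ?_) (fun k => ?_)
  · have h : ∑ j, star (B * L j - L j * B) * (B * L j - L j * B) = 0 := by
      simp only [star_sub, star_mul]
      rw [← lindbladian_mul_sub, h₁, sub_sub, sub_self]
    exact sub_eq_zero.mp (CStarRing.eq_zero_of_sum_star_mul_self_eq_zero h (Finset.mem_univ k))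
  · have h : ∑ j, star (star (star (L j) * B - B * star (L j))) *
        star (star (L j) * B - B * star (L j)) = 0 := by
      simp only [star_star, star_sub, star_mul]
      rw [← lindbladian_mul_sub, h₂, sub_sub, sub_self]
    have hk := star_eq_zero.mp (CStarRing.eq_zero_of_sum_star_mul_self_eq_zero h (Finset.mem_univ k))
    exact (sub_eq_zero.mp hk).symm

theorem eqOn_Ici_of_hasDerivAt_linear {E : Type*} [NormedAddCommGroup E] [NormedSpace ℂ E]
    [FiniteDimensional ℂ E] (T : E →ₗ[ℂ] E) {f g : ℝ → E}
    (hf : ∀ t, 0 ≤ t → HasDerivAt f (T (f t)) t) (hg : ∀ t, 0 ≤ t → HasDerivAt g (T (g t)) t)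
    (h₀ : f 0 = g 0) : EqOn f g (Ici 0) := fun _ ht =>
  ODE_solution_unique (v := fun _ => T) (fun _ => (LinearMap.toContinuousLinearMap T).lipschitz)
    (fun s hs => (hf s hs.1).continuousAt.continuousWithinAt)
    (fun s hs => (hf s hs.1).hasDerivWithinAt)
    (fun s hs => (hg s hs.1).continuousAt.continuousWithinAt)
    (fun s hs => (hg s hs.1).hasDerivWithinAt) h₀ ⟨ht, le_rfl⟩

theorem map_mul_eq_of_hasDerivAt_of_eqOn_Ici {A : Type*} [NormedRing A] [NormedAlgebra ℝ A]
    (T : A → A) {f g h : ℝ → A} {t : ℝ} (hf : HasDerivAt f (T (f t)) t)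
    (hg : HasDerivAt g (T (g t)) t) (hh : HasDerivAt h (T (h t)) t)
    (hfg : EqOn h (f * g) (Ici t)) :
    T (f t * g t) = T (f t) * g t + f t * T (g t) := by
  rw [← show h t = f t * g t from hfg self_mem_Ici]
  exact (uniqueDiffOn_Ici t t self_mem_Ici).eq_deriv _ hh.hasDerivWithinAt
    ((hf.mul hg).hasDerivWithinAt.congr hfg (hfg self_mem_Ici))

theorem hasDerivAt_exp_smul_mul_mul_exp_neg_smul {𝔸 : Type*} [NormedRing 𝔸] [NormedAlgebra ℝ 𝔸]
    [CompleteSpace 𝔸] (K X : 𝔸) (t : ℝ) :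
    HasDerivAt (fun u : ℝ => exp (u • K) * X * exp (u • -K))
      (K * (exp (t • K) * X * exp (t • -K)) - exp (t • K) * X * exp (t • -K) * K) t := by
  have hK : Commute (-K) (exp (t • -K)) := ((Commute.refl (-K)).smul_right t).exp_right
  refine (((hasDerivAt_exp_smul_const' K t).mul_const X).mul
    (hasDerivAt_exp_smul_const' (-K) t)).congr_deriv ?_
  rw [hK.eq]
  noncomm_ring

noncomputable def hamiltonianEvolution {𝔸 : Type*} [NormedRing 𝔸] [NormedAlgebra ℂ 𝔸]
    (H X : 𝔸) (t : ℝ) : 𝔸 :=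
  exp ((Complex.I * t) • H) * X * exp ((-(Complex.I * t)) • H)

theorem hamiltonianEvolution_zero {𝔸 : Type*} [NormedRing 𝔸] [NormedAlgebra ℂ 𝔸] (H X : 𝔸) :
    hamiltonianEvolution H X 0 = X := by
  simp [hamiltonianEvolution]

theorem hasDerivAt_hamiltonianEvolution {𝔸 : Type*} [NormedRing 𝔸] [NormedAlgebra ℂ 𝔸]
    [CompleteSpace 𝔸] (H X : 𝔸) (t : ℝ) :
    HasDerivAt (hamiltonianEvolution H X) (Complex.I •
      (H * hamiltonianEvolution H X t - hamiltonianEvolution H X t * H)) t := by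
  have hK : ∀ u : ℝ, (Complex.I * u) • H = u • (Complex.I • H) := fun u => by
    rw [mul_comm, ← smul_smul, Complex.coe_smul]
  have hH : hamiltonianEvolution H X = fun u : ℝ => exp (u • Complex.I • H) * X *
      exp (u • -(Complex.I • H)) := by
    funext u
    rw [hamiltonianEvolution, hK, neg_smul, hK, smul_neg]
  rw [hH]
  exact (hasDerivAt_exp_smul_mul_mul_exp_neg_smul _ X t).congr_deriv
    (by simp only [smul_sub, smul_mul_assoc, mul_smul_comm])

def decoherenceFree {A : Type*} [Mul A] (Φ : ℝ → A → A) : Set A :=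
  {X | ∀ t, 0 ≤ t → ∀ Y, Φ t (Y * X) = Φ t Y * Φ t X ∧ Φ t (X * Y) = Φ t X * Φ t Y}

section DecoherenceFree

variable {A : Type*} [CStarAlgebra A] [FiniteDimensional ℂ A] {ι : Type*} [Fintype ι]
  {Φ : ℝ → A → A} {H₀ : A}

theorem map_star_of_hasDerivAt_lindbladian (hH : IsSelfAdjoint H₀) (L : ι → A)
    (hΦ₀ : ∀ Y, Φ 0 Y = Y)
    (hΦ : ∀ Y t, HasDerivAt (fun s => Φ s Y) (lindbladian H₀ L (Φ t Y)) t) (Y : A) :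
    EqOn (fun t => Φ t (star Y)) (fun t => star (Φ t Y)) (Ici 0) :=
  eqOn_Ici_of_hasDerivAt_linear (lindbladian H₀ L) (fun t _ => hΦ (star Y) t)
    (fun t _ => by simpa only [lindbladian_star hH] using (hΦ Y t).star) (by simp only [hΦ₀])

theorem lindbladian_apply_eq_of_mem_decoherenceFree [PartialOrder A] [StarOrderedRing A]
    (hH : IsSelfAdjoint H₀) (L : ι → A) (hΦ₀ : ∀ Y, Φ 0 Y = Y)
    (hΦ : ∀ Y t, HasDerivAt (fun s => Φ s Y) (lindbladian H₀ L (Φ t Y)) t)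
    {X : A} (hX : X ∈ decoherenceFree Φ) {t : ℝ} (ht : 0 ≤ t) :
    lindbladian H₀ L (Φ t X) = Complex.I • (H₀ * Φ t X - Φ t X * H₀) := by
  have hstar : Φ t (star X) = star (Φ t X) := map_star_of_hasDerivAt_lindbladian hH L hΦ₀ hΦ X ht
  refine lindbladian_eq_of_derivation_star H₀ L ?_ ?_ <;> rw [← hstar]
  · exact map_mul_eq_of_hasDerivAt_of_eqOn_Ici _ (hΦ _ t) (hΦ X t) (hΦ _ t)
      fun s hs => (hX s (ht.trans hs) _).1
  · exact map_mul_eq_of_hasDerivAt_of_eqOn_Ici _ (hΦ X t) (hΦ _ t) (hΦ _ t)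
      fun s hs => (hX s (ht.trans hs) _).2

end DecoherenceFree

/-- For a quantum dynamical semigroup with GKLS generator, the decoherence-free
algebra is contained in the set of observables evolving by the Hamiltonian
unitary conjugation generated by H₀. -/
theorem decFree_subset_hamiltonian_evolution {n m : ℕ}
    (Φ : ℝ → Module.End ℂ (BH n)) (Lgen : Module.End ℂ (BH n))
    (H₀ : BH n) (L : Fin m → BH n)
    (hGKLS : IsGKLS Lgen H₀ L)
    (hΦ0 : Φ 0 = LinearMap.id)
    (hderiv : ∀ (X : BH n) (t : ℝ), HasDerivAt (fun s => Φ s X) (Lgen (Φ t X)) t)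
    (X : BH n)
    (hX : ∀ t : ℝ, 0 ≤ t → ∀ Y : BH n,
      Φ t (Y * X) = Φ t Y * Φ t X ∧ Φ t (X * Y) = Φ t X * Φ t Y) :
    ∀ t : ℝ, 0 ≤ t →
      Φ t X = NormedSpace.exp ((Complex.I * (t : ℂ)) • H₀) * X *
        NormedSpace.exp ((-(Complex.I * (t : ℂ))) • H₀) := by
  have hΦ₀ : ∀ Y, Φ 0 Y = Y := fun Y => by rw [hΦ0, LinearMap.id_apply]
  obtain rfl : Lgen = lindbladian H₀ L :=
    LinearMap.ext fun Y => (hGKLS.2 Y).trans (lindbladian_apply H₀ L Y).symm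
  intro t ht
  refine eqOn_Ici_of_hasDerivAt_linear (f := fun s => Φ s X)
    (Complex.I • (LinearMap.mulLeft ℂ H₀ - LinearMap.mulRight ℂ H₀)) (fun s hs => ?_)
    (fun s _ => hasDerivAt_hamiltonianEvolution H₀ X s)
    (by rw [hΦ₀, hamiltonianEvolution_zero]) ht
  have hHamiltonian := lindbladian_apply_eq_of_mem_decoherenceFree (Φ := fun t => Φ t)
    hGKLS.1 L hΦ₀ hderiv hX hs
  simpa only [LinearMap.smul_apply, LinearMap.sub_apply, LinearMap.mulLeft_apply,
    LinearMap.mulRight_apply, hHamiltonian] using hderiv X s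
end
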